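/- Let H_0 and V be Hermitian operators on a finite-dimensional complex inner product space. Let P be the orthogonal projection onto the E_0-eigenspace of H_0, Q = 1 − P, and let ω be a real number that is not an eigenvalue of the restriction of H_0 to the range of Q; let G_0(ω) vanish on the range of P and equal the inverse of (ω − H_0) on the range of Q. Let s be real with ‖s G_0(ω) V‖ < 1, and let ξ in the range of P satisfy h(ω,s) ξ = ω ξ, where h(ω,s) = P H_0 P + P s V (Σ_{k≥0} (s G_0(ω) V)^k) P. Define Φ_s = Σ_{k≥0} (s G_0(ω) V)^k ξ. Let ζ > 0, set J_0 = H_0 + ζP, and assume ω − J_0 is invertible and ‖s (ω − J_0)^{-1} V‖ < 1. Then the vector φ_s = Σ_{k≥0} (s (ω − J_0)^{-1} V)^k ξ satisfies φ_s = ((ζ + E_0 − ω)/ζ) · Φ_s; in particular (H_0 + sV) φ_s = ω φ_s, and φ_s ≠ 0 whenever ξ ≠ 0 and ω ≠ E_0 + ζ. -/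

import Mathlib

/-- The orthogonal projection onto a subspace, as a continuous operator on the whole space. -/
noncomputable def projCLM {E : Type*} [NormedAddCommGroup E] [InnerProductSpace ℂ E]
    (K : Submodule ℂ E) [K.HasOrthogonalProjection] : E →L[ℂ] E :=
  K.subtypeL ∘L K.orthogonalProjectionOnto

/-- Modified Brillouin–Wigner perturbation theory. With the setup of the
Brillouin–Wigner theory (projection `P` onto the `E0`-eigenspace of `H0`, pseudo-inverse `G0`
of `ω − H0` on the range of `Q = 1 − P`, `‖s G0 V‖ < 1`, `ξ` in the range of `P` an
eigenvector of the effective Hamiltonian with eigenvalue `ω`, `Φ_s = Σ_k (s G0 V)^k ξ`),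
and additionally `ζ > 0`, `J0 = H0 + ζP`, `R` the inverse of `ω − J0`, and `‖s R V‖ < 1`,
the vector `φ_s = Σ_k (s R V)^k ξ` satisfies `φ_s = ((ζ + E0 − ω)/ζ) Φ_s`; in particular
`(H0 + sV) φ_s = ω φ_s`, and `φ_s ≠ 0` whenever `ξ ≠ 0` and `ω ≠ E0 + ζ`. -/
theorem modified_brillouin_wigner
    {E : Type*} [NormedAddCommGroup E] [InnerProductSpace ℂ E] [FiniteDimensional ℂ E]
    (H0 V G0 R : E →L[ℂ] E) (hH0 : IsSelfAdjoint H0) (hV : IsSelfAdjoint V)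
    (E0 ω s ζ : ℝ) (hζ : 0 < ζ)
    (hG0P : G0 * projCLM (Module.End.eigenspace (H0 : E →ₗ[ℂ] E) (E0 : ℂ)) = 0)
    (hPG0 : projCLM (Module.End.eigenspace (H0 : E →ₗ[ℂ] E) (E0 : ℂ)) * G0 = 0)
    (hG0l : G0 * ((ω : ℂ) • (1 : E →L[ℂ] E) - H0)
      = 1 - projCLM (Module.End.eigenspace (H0 : E →ₗ[ℂ] E) (E0 : ℂ)))
    (hG0r : ((ω : ℂ) • (1 : E →L[ℂ] E) - H0) * G0
      = 1 - projCLM (Module.End.eigenspace (H0 : E →ₗ[ℂ] E) (E0 : ℂ)))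
    (hs : ‖(s : ℂ) • (G0 * V)‖ < 1)
    (ξ : E)
    (hξP : projCLM (Module.End.eigenspace (H0 : E →ₗ[ℂ] E) (E0 : ℂ)) ξ = ξ)
    (hξeig :
      (projCLM (Module.End.eigenspace (H0 : E →ₗ[ℂ] E) (E0 : ℂ)) * H0
          * projCLM (Module.End.eigenspace (H0 : E →ₗ[ℂ] E) (E0 : ℂ))
        + projCLM (Module.End.eigenspace (H0 : E →ₗ[ℂ] E) (E0 : ℂ)) * ((s : ℂ) • V)
          * (∑' k : ℕ, ((s : ℂ) • (G0 * V)) ^ k)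
          * projCLM (Module.End.eigenspace (H0 : E →ₗ[ℂ] E) (E0 : ℂ))) ξ
        = (ω : ℂ) • ξ)
    (hRl : R * ((ω : ℂ) • (1 : E →L[ℂ] E)
      - (H0 + (ζ : ℂ) • projCLM (Module.End.eigenspace (H0 : E →ₗ[ℂ] E) (E0 : ℂ)))) = 1)
    (hRr : ((ω : ℂ) • (1 : E →L[ℂ] E)
      - (H0 + (ζ : ℂ) • projCLM (Module.End.eigenspace (H0 : E →ₗ[ℂ] E) (E0 : ℂ)))) * R = 1)
    (hsR : ‖(s : ℂ) • (R * V)‖ < 1) :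
    (∑' k : ℕ, ((s : ℂ) • (R * V)) ^ k) ξ
        = (((ζ + E0 - ω) / ζ : ℝ) : ℂ) • ((∑' k : ℕ, ((s : ℂ) • (G0 * V)) ^ k) ξ) ∧
      (H0 + (s : ℂ) • V) ((∑' k : ℕ, ((s : ℂ) • (R * V)) ^ k) ξ)
        = (ω : ℂ) • ((∑' k : ℕ, ((s : ℂ) • (R * V)) ^ k) ξ) ∧
      (ξ ≠ 0 → ω ≠ E0 + ζ → (∑' k : ℕ, ((s : ℂ) • (R * V)) ^ k) ξ ≠ 0) := by
    classical
  set K := Module.End.eigenspace (H0 : E →ₗ[ℂ] E) (E0 : ℂ) with hK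
  set P := projCLM K with hPdef
  have hmem : ∀ x : E, P x ∈ K := fun x => (K.orthogonalProjectionOnto x).2
  have hHP : ∀ x : E, H0 (P x) = (E0 : ℂ) • P x := fun x =>
    Module.End.mem_eigenspace_iff.mp (hmem x)
  have hPid : ∀ x : E, P (P x) = P x := fun x =>
    (Submodule.starProjection_eq_self_iff (K := K)).mpr (hmem x)
  have hH0ξ : H0 ξ = (E0 : ℂ) • ξ := by rw [← hξP]; exact hHP ξ
  set A := (s : ℂ) • (G0 * V) with hA
  set B := (s : ℂ) • (R * V) with hB
  set S := ∑' k : ℕ, A ^ k with hS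
  set T := ∑' k : ℕ, B ^ k with hT
  have hSl : (1 - A) * S = 1 := mul_neg_geom_series A hs
  have hTr : T * (1 - B) = 1 := geom_series_mul_neg B hsR
  set Φ := S ξ with hΦdef
  have hΦ : Φ = ξ + A Φ := by
    have := congrArg (fun f : E →L[ℂ] E => f ξ) hSl
    simp only [ContinuousLinearMap.mul_apply, ContinuousLinearMap.sub_apply,
      ContinuousLinearMap.one_apply] at this
    rw [← hΦdef] at this
    rw [← this]; abel
  have hPA : P * A = 0 := by
    rw [hA, mul_smul_comm, ← mul_assoc, hPG0, zero_mul, smul_zero]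
  have hPΦ : P Φ = ξ := by
    have h1 : P (A Φ) = (P * A) Φ := (ContinuousLinearMap.mul_apply _ _ _).symm
    rw [hΦ, map_add, hξP, h1, hPA]
    simp
  set w := ((s : ℂ) • V) Φ with hw
  have hPw : P w = ((ω : ℂ) - E0) • ξ := by
    have h1 : (P * H0 * P) ξ = (E0 : ℂ) • ξ := by
      simp only [ContinuousLinearMap.mul_apply]
      rw [hξP, hH0ξ, map_smul, hξP]
    have h2 : (P * ((s : ℂ) • V) * S * P) ξ = P w := by
      simp only [ContinuousLinearMap.mul_apply]
      rw [hξP]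
    rw [ContinuousLinearMap.add_apply, h1, h2] at hξeig
    have : P w = (ω : ℂ) • ξ - (E0 : ℂ) • ξ := by
      rw [← hξeig]; abel
    rw [this, sub_smul]
  have hAΦ : A Φ = G0 w := by
    rw [hA, hw]
    simp [ContinuousLinearMap.mul_apply, map_smul]
  have hG0w : G0 w = Φ - ξ := by
    rw [← hAΦ, eq_sub_iff_add_eq, add_comm]
    exact hΦ.symm
  -- eigenvalue equation for Φ
  have hΦeig : (H0 + (s : ℂ) • V) Φ = (ω : ℂ) • Φ := by
    have hQ : ((ω : ℂ) • (1 : E →L[ℂ] E) - H0) (G0 w) = w - P w := by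
      rw [← ContinuousLinearMap.mul_apply, hG0r]
      simp [ContinuousLinearMap.sub_apply]
    have hH0Φ : H0 Φ = (E0 : ℂ) • ξ + H0 (G0 w) := by
      rw [hΦ, hAΦ, map_add, hH0ξ]
    have : (ω : ℂ) • Φ - H0 Φ = w := by
      have e1 : (ω : ℂ) • Φ = (ω : ℂ) • ξ + (ω : ℂ) • (G0 w) := by
        rw [hΦ, hAΦ, smul_add]
      rw [e1, hH0Φ]
      have e2 : (ω : ℂ) • G0 w - H0 (G0 w) = w - P w := by
        rw [← hQ]
        simp [ContinuousLinearMap.sub_apply, ContinuousLinearMap.smul_apply]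
      have : (ω : ℂ) • ξ + (ω : ℂ) • G0 w - ((E0 : ℂ) • ξ + H0 (G0 w))
          = ((ω : ℂ) - E0) • ξ + ((ω : ℂ) • G0 w - H0 (G0 w)) := by
        rw [sub_smul]; abel
      rw [this, e2, hPw]; abel
    have : (H0 + (s : ℂ) • V) Φ = H0 Φ + w := by
      rw [hw, ContinuousLinearMap.add_apply]
    rw [this]
    have hwval : w = (ω : ℂ) • Φ - H0 Φ := by rw [← ‹(ω : ℂ) • Φ - H0 Φ = w›]
    rw [hwval]; abel
  by_cases hξ0 : ξ = 0
  · have hΦ0 : Φ = 0 := by rw [hΦdef, hξ0, map_zero]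
    have hT0 : T ξ = 0 := by rw [hξ0, map_zero]
    refine ⟨?_, ?_, ?_⟩
    · rw [hT0, hΦ0, smul_zero]
    · rw [hT0, map_zero, smul_zero]
    · intro h; exact absurd hξ0 h
  -- ξ ≠ 0 : derive ω ≠ E0 + ζ
  have hJξ : ∀ (h : (ω : ℂ) - E0 - ζ ≠ 0), True := fun _ => trivial
  have hωJξ : ((ω : ℂ) • (1 : E →L[ℂ] E) - (H0 + (ζ : ℂ) • P)) ξ
      = ((ω : ℂ) - E0 - ζ) • ξ := by
    simp only [ContinuousLinearMap.sub_apply, ContinuousLinearMap.add_apply,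
      ContinuousLinearMap.smul_apply, ContinuousLinearMap.one_apply, hH0ξ, hξP]
    rw [sub_smul, sub_smul]
    abel
  have hne : (ω : ℂ) - E0 - ζ ≠ 0 := by
    intro h
    have := congrArg (fun f : E →L[ℂ] E => f ξ) hRl
    simp only [ContinuousLinearMap.mul_apply, ContinuousLinearMap.one_apply] at this
    rw [hωJξ, h, zero_smul, map_zero] at this
    exact hξ0 this.symm
  set μ : ℂ := ((ω : ℂ) - E0 - ζ)⁻¹ with hμ
  have hHPop : H0 * P = (E0 : ℂ) • P := by
    ext x
    simp only [ContinuousLinearMap.mul_apply, ContinuousLinearMap.smul_apply]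
    exact hHP x
  have hPPop : P * P = P := by
    ext x
    exact hPid x
  have hkeyR : ((ω : ℂ) • (1 : E →L[ℂ] E) - (H0 + (ζ : ℂ) • P)) * (G0 + μ • P) = 1 := by
    have e1 : ((ω : ℂ) • (1 : E →L[ℂ] E) - (H0 + (ζ : ℂ) • P)) * (G0 + μ • P)
        = (((ω : ℂ) • (1 : E →L[ℂ] E) - H0) * G0) - (ζ : ℂ) • (P * G0)
          + μ • (((ω : ℂ) • (1 : E →L[ℂ] E) - H0) * P) - (ζ * μ) • (P * P) := by
      simp only [mul_add, add_mul, sub_mul, smul_mul_assoc, mul_smul_comm, smul_smul,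
        smul_add, smul_sub, one_mul]
      module
    have e2 : ((ω : ℂ) • (1 : E →L[ℂ] E) - H0) * P = ((ω : ℂ) - E0) • P := by
      rw [sub_mul, smul_mul_assoc, one_mul, hHPop, sub_smul]
    rw [e1, hG0r, hPG0, e2, hPPop, smul_zero, smul_smul]
    have e3 : μ * ((ω : ℂ) - E0) - ζ * μ = 1 := by
      rw [hμ]
      field_simp
    have : (1 : E →L[ℂ] E) - P - 0 + (μ * ((ω : ℂ) - E0)) • P - (ζ * μ) • P
        = 1 - P + (μ * ((ω : ℂ) - E0) - ζ * μ) • P := by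
      rw [sub_smul]; abel
    rw [this, e3, one_smul]
    abel
  have hReq : R = G0 + μ • P := by
    calc R = R * (((ω : ℂ) • (1 : E →L[ℂ] E) - (H0 + (ζ : ℂ) • P)) * (G0 + μ • P)) := by
            rw [hkeyR, mul_one]
      _ = (R * ((ω : ℂ) • (1 : E →L[ℂ] E) - (H0 + (ζ : ℂ) • P))) * (G0 + μ • P) := by
            rw [mul_assoc]
      _ = G0 + μ • P := by rw [hRl, one_mul]
  have hBΦ : B Φ = (Φ - ξ) + (μ * ((ω : ℂ) - E0)) • ξ := by
    have : B Φ = R w := by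
      rw [hB, hw]
      simp [ContinuousLinearMap.mul_apply, map_smul]
    rw [this, hReq]
    simp only [ContinuousLinearMap.add_apply, ContinuousLinearMap.smul_apply]
    rw [hG0w, hPw, smul_smul]
  set c : ℂ := (((ζ + E0 - ω) / ζ : ℝ) : ℂ) with hc
  have hζℂ : (ζ : ℂ) ≠ 0 := by
    exact_mod_cast ne_of_gt hζ
  have hcval : c * (1 - μ * ((ω : ℂ) - E0)) = 1 := by
    rw [hc, hμ]
    push_cast
    field_simp
    ring
  have hkey : ((1 : E →L[ℂ] E) - B) (c • Φ) = ξ := by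
    simp only [ContinuousLinearMap.sub_apply, ContinuousLinearMap.one_apply, map_smul]
    rw [hBΦ]
    conv_rhs => rw [← one_smul ℂ ξ, ← hcval]
    module
  have conj1 : T ξ = c • Φ := by
    have : T ξ = T (((1 : E →L[ℂ] E) - B) (c • Φ)) := by rw [hkey]
    rw [this, ← ContinuousLinearMap.mul_apply, hTr, ContinuousLinearMap.one_apply]
  refine ⟨conj1, ?_, ?_⟩
  · rw [conj1, map_smul, hΦeig, smul_comm]
  · intro _ hω
    rw [conj1]
    have hc0 : c ≠ 0 := by
      rw [hc]
      have : (ζ + E0 - ω) / ζ ≠ 0 := by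
        apply div_ne_zero _ (ne_of_gt hζ)
        intro h
        apply hω
        linarith
      exact_mod_cast this
    have hΦ0 : Φ ≠ 0 := by
      intro h
      apply hξ0
      rw [← hPΦ, h, map_zero]
    exact smul_ne_zero hc0 hΦ0
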